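/- arXiv:2307.12059 — 3 statements merged into one kernel-verified Lean document; each statement's English description precedes it below -/
import Mathlib

section
/- Completeness of range-based candidate generation: let A' and B' be the elements of A and B sorted in nondecreasing order of their distances to pivot p, with sorted distance arrays sa(i) = dist(p, a'_i) and sb(j) = dist(p, b'_j). For each i, let s_i and e_i be the minimum and maximum indices j with |sa(i) − sb(j)| ≤ ε (when nonempty). Then every pair (a'_i, b'_j) with dist(a'_i, b'_j) ≤ ε satisfies s_i ≤ j ≤ e_i. -/
open scoped Classical in
theorem range_candidates_complete {S : Type*} [MetricSpace S] (p : S) (ε : ℝ) (hε : 0 ≤ ε)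
    {m n : ℕ} (a' : Fin m → S) (b' : Fin n → S)
    (hsa : Monotone (fun i => dist p (a' i))) (hsb : Monotone (fun j => dist p (b' j)))
    (sa : Fin m → ℝ) (sb : Fin n → ℝ)
    (hsa' : ∀ i, sa i = dist p (a' i)) (hsb' : ∀ j, sb j = dist p (b' j)) :
    ∀ (i : Fin m) (j : Fin n), dist (a' i) (b' j) ≤ ε →
      ∀ (hne : (Finset.univ.filter (fun k : Fin n => |sa i - sb k| ≤ ε)).Nonempty),
        (Finset.univ.filter (fun k : Fin n => |sa i - sb k| ≤ ε)).min' hne ≤ j ∧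
        j ≤ (Finset.univ.filter (fun k : Fin n => |sa i - sb k| ≤ ε)).max' hne := by
  intro i j hd hne
  have hj : j ∈ Finset.univ.filter (fun k : Fin n => |sa i - sb k| ≤ ε) := by
    simp only [Finset.mem_filter, Finset.mem_univ, true_and, hsa', hsb']
    rw [dist_comm p (a' i), dist_comm p (b' j)]; exact le_trans (abs_dist_sub_le (a' i) (b' j) p) hd
  exact ⟨Finset.min'_le _ _ hj, Finset.le_max' _ _ hj⟩
end

section
/- If the candidate-range algorithm outputs all pairs (a'_i, b'_j) with j ∈ [s_i, e_i] and dist(a'_i, b'_j) ≤ ε (after verification), then the output equals exactly the full join result {(a,b) ∈ A×B : dist(a,b) ≤ ε}. -/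
open scoped Classical in
theorem verified_output_eq_join {S : Type*} [MetricSpace S] (p : S) (ε : ℝ) (hε : 0 ≤ ε)
    {m n : ℕ} (a' : Fin m → S) (b' : Fin n → S)
    (hsa : Monotone (fun i => dist p (a' i))) (hsb : Monotone (fun j => dist p (b' j)))
    (sa : Fin m → ℝ) (sb : Fin n → ℝ)
    (hsa' : ∀ i, sa i = dist p (a' i)) (hsb' : ∀ j, sb j = dist p (b' j))
    (hne : ∀ i : Fin m, (Finset.univ.filter (fun k : Fin n => |sa i - sb k| ≤ ε)).Nonempty)
    (s e : Fin m → Fin n)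
    (hs : ∀ i, s i = (Finset.univ.filter (fun k : Fin n => |sa i - sb k| ≤ ε)).min' (hne i))
    (he : ∀ i, e i = (Finset.univ.filter (fun k : Fin n => |sa i - sb k| ≤ ε)).max' (hne i)) :
    {q : Fin m × Fin n | s q.1 ≤ q.2 ∧ q.2 ≤ e q.1 ∧ dist (a' q.1) (b' q.2) ≤ ε} =
      {q : Fin m × Fin n | dist (a' q.1) (b' q.2) ≤ ε} := by
  ext ⟨i, j⟩
  simp only [Set.mem_setOf_eq]
  constructor
  · rintro ⟨-, -, h⟩; exact h
  · intro h
    have habs : |sa i - sb j| ≤ ε := by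
      rw [hsa', hsb']
      have h2 := abs_dist_sub_le (a' i) (b' j) p
      rw [dist_comm (a' i) p, dist_comm (b' j) p] at h2
      exact le_trans h2 h
    have hmem : j ∈ Finset.univ.filter (fun k : Fin n => |sa i - sb k| ≤ ε) := by
      simp [habs]
    exact ⟨hs i ▸ Finset.min'_le _ j hmem, he i ▸ Finset.le_max' _ j hmem, h⟩
end

section
/- Grouping preserves correctness: if consecutive indices i ∈ [start, end) are grouped and each a'_i is compared against all b'_j with j ∈ [min_{i∈[start,end)} s_i, max_{i∈[start,end)} e_i], then all pairs with |sa(i) − sb(j)| ≤ ε for i in the group are examined; moreover, by monotonicity of s and e, the group's range equals [s_start, e_{end−1}]. -/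
open scoped Classical in
theorem grouping_correct {m n : ℕ} (sa : Fin m → ℝ) (sb : Fin n → ℝ)
    (hsa : Monotone sa) (hsb : Monotone sb) (ε : ℝ) (hε : 0 < ε)
    (hne : ∀ i : Fin m, (Finset.univ.filter (fun j : Fin n => |sa i - sb j| ≤ ε)).Nonempty)
    (s e : Fin m → Fin n)
    (hs : ∀ i, s i = (Finset.univ.filter (fun j : Fin n => |sa i - sb j| ≤ ε)).min' (hne i))
    (he : ∀ i, e i = (Finset.univ.filter (fun j : Fin n => |sa i - sb j| ≤ ε)).max' (hne i))
    (start endG : ℕ) (hstart : start < endG) (hendG : endG ≤ m) :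
    (∀ (i : Fin m) (j : Fin n), start ≤ (i : ℕ) → (i : ℕ) < endG → |sa i - sb j| ≤ ε →
      s ⟨start, by omega⟩ ≤ j ∧ j ≤ e ⟨endG - 1, by omega⟩) ∧
    (∀ i : Fin m, start ≤ (i : ℕ) → (i : ℕ) < endG →
      s ⟨start, by omega⟩ ≤ s i ∧ e i ≤ e ⟨endG - 1, by omega⟩) := by
  have hmem : ∀ i : Fin m, |sa i - sb (s i)| ≤ ε := by
    intro i
    have h := Finset.min'_mem (Finset.univ.filter fun j : Fin n => |sa i - sb j| ≤ ε) (hne i)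
    rw [Finset.mem_filter] at h
    rw [hs i]; exact h.2
  have hmem' : ∀ i : Fin m, |sa i - sb (e i)| ≤ ε := by
    intro i
    have h := Finset.max'_mem (Finset.univ.filter fun j : Fin n => |sa i - sb j| ≤ ε) (hne i)
    rw [Finset.mem_filter] at h
    rw [he i]; exact h.2
  have hmin : ∀ (i : Fin m) (j : Fin n), |sa i - sb j| ≤ ε → s i ≤ j := by
    intro i j hj
    rw [hs i]
    exact Finset.min'_le _ j (Finset.mem_filter.mpr ⟨Finset.mem_univ _, hj⟩)
  have hmax : ∀ (i : Fin m) (j : Fin n), |sa i - sb j| ≤ ε → j ≤ e i := by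
    intro i j hj
    rw [he i]
    exact Finset.le_max' _ j (Finset.mem_filter.mpr ⟨Finset.mem_univ _, hj⟩)
  have smono : ∀ i i' : Fin m, i ≤ i' → s i ≤ s i' := by
    intro i i' hii
    have hsaii : sa i ≤ sa i' := hsa hii
    have h1 := hmem i'
    rw [abs_le] at h1
    by_cases hc : sb (s i') ≤ sa i + ε
    · apply hmin
      rw [abs_le]
      constructor <;> linarith
    · push_neg at hc
      by_contra hlt
      push_neg at hlt
      have hmono : sb (s i') ≤ sb (s i) := hsb hlt.le
      have h2 := hmem i
      rw [abs_le] at h2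
      linarith
  have emono : ∀ i i' : Fin m, i ≤ i' → e i ≤ e i' := by
    intro i i' hii
    have hsaii : sa i ≤ sa i' := hsa hii
    have h1 := hmem' i
    rw [abs_le] at h1
    by_cases hc : sa i' - ε ≤ sb (e i)
    · apply hmax
      rw [abs_le]
      constructor <;> linarith
    · push_neg at hc
      by_contra hlt
      push_neg at hlt
      have hmono : sb (e i') ≤ sb (e i) := hsb hlt.le
      have h2 := hmem' i'
      rw [abs_le] at h2
      linarith
  have hle1 : ∀ i : Fin m, start ≤ (i : ℕ) → (⟨start, by omega⟩ : Fin m) ≤ i := by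
    intro i h; exact h
  have hle2 : ∀ i : Fin m, (i : ℕ) < endG → i ≤ (⟨endG - 1, by omega⟩ : Fin m) := by
    intro i h
    show (i : ℕ) ≤ endG - 1
    omega
  constructor
  · intro i j h1 h2 hj
    exact ⟨le_trans (smono _ i (hle1 i h1)) (hmin i j hj),
      le_trans (hmax i j hj) (emono i _ (hle2 i h2))⟩
  · intro i h1 h2
    exact ⟨smono _ i (hle1 i h1), emono i _ (hle2 i h2)⟩
end
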